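/- arXiv:1210.2274 — 6 statements merged into one kernel-verified Lean document; each statement's English description precedes it below -/
import Mathlib

section
/- Let (Ω, μ) be a measure space and let 1 < p ≤ 2. Let u, v ∈ L^p(Ω, μ) be real-valued, not both equal to 0 almost everywhere. Then ∫_Ω (φ_p(u(x)) − φ_p(v(x)))(u(x) − v(x)) dμ(x) ≥ (p − 1) ‖ |u| + |v| ‖_{L^p}^{p−2} ‖u − v‖_{L^p}^2, where the integrand is nonnegative and integrable. -/
/-!
Pointwise, the integrand dominates `(p - 1) (|u| + |v|)^(p-2) (u - v)^2`: with
`M = |a| + |b|`, the odd function `t ↦ φ_p(t) - (p - 1) M^(p-2) t` is nondecreasing on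
`[-M, M]`, since on `(0, M]` its derivative is `(p - 1) (t^(p-2) - M^(p-2)) ≥ 0` as `p ≤ 2`.
It remains to bound `∫ w^(p-2) (u - v)^2`, `w = |u| + |v|`, from below by
`‖w‖_p^(p-2) ‖u - v‖_p^2`. This is Hölder's inequality with the exponents
`p/2 + (1 - p/2) = 1` applied to `|u - v|^p = (w^(p-2) (u - v)^2)^(p/2) (w^p)^(1 - p/2)`.
-/

open MeasureTheory Set Real

theorem Real.rpow_sub_two_mul_sq_le {p w a : ℝ} (ha : |a| ≤ w) :
    w ^ (p - 2) * a ^ 2 ≤ w ^ p := by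
  rcases (abs_nonneg a).trans ha |>.eq_or_lt with rfl | hw
  · obtain rfl : a = 0 := abs_nonpos_iff.1 ha
    rw [zero_pow two_ne_zero, mul_zero]
    exact rpow_nonneg le_rfl p
  · calc w ^ (p - 2) * a ^ 2 ≤ w ^ (p - 2) * w ^ (2 : ℝ) := by
          rw [rpow_two, ← sq_abs]
          gcongr
      _ = w ^ p := by rw [← rpow_add hw, sub_add_cancel]

theorem Real.abs_rpow_eq_rpow_sub_two_mul_sq_rpow_mul {p w a : ℝ} (hp : 0 < p) (ha : |a| ≤ w) :
    |a| ^ p = (w ^ (p - 2) * a ^ 2) ^ (p / 2) * (w ^ p) ^ (1 - p / 2) := by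
  rcases (abs_nonneg a).trans ha |>.eq_or_lt with rfl | hw
  · obtain rfl : a = 0 := abs_nonpos_iff.1 ha
    simp [zero_rpow hp.ne', zero_rpow (div_pos hp two_pos).ne']
  · rw [mul_rpow (rpow_nonneg hw.le _) (sq_nonneg a), ← sq_abs, ← rpow_two, ← rpow_mul hw.le,
      ← rpow_mul (abs_nonneg a), ← rpow_mul hw.le, mul_right_comm, ← rpow_add hw,
      show (p - 2) * (p / 2) + p * (1 - p / 2) = 0 by ring, rpow_zero, one_mul,
      mul_div_cancel₀ p two_ne_zero]

theorem Real.rpow_neg_mul_rpow_le_one {x : ℝ} (hx : 0 ≤ x) (y : ℝ) :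
    x ^ (-y) * x ^ y ≤ 1 := by
  rw [rpow_neg hx]
  exact inv_mul_le_one_of_le₀ le_rfl (rpow_nonneg hx y)

namespace MeasureTheory

variable {α : Type*} [MeasurableSpace α] {μ : Measure α} {p : ℝ}

theorem integral_rpow_mul_rpow_le {f g : α → ℝ} (hf : Integrable f μ) (hg : Integrable g μ)
    (hf0 : 0 ≤ᵐ[μ] f) (hg0 : 0 ≤ᵐ[μ] g) {a b : ℝ} (ha : 0 ≤ a) (hb : 0 ≤ b)
    (hab : a + b = 1) :
    ∫ x, f x ^ a * g x ^ b ∂μ ≤ (∫ x, f x ∂μ) ^ a * (∫ x, g x ∂μ) ^ b := by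
  have hholder := ENNReal.lintegral_mul_norm_pow_le hf.1.aemeasurable.ennreal_ofReal
    hg.1.aemeasurable.ennreal_ofReal ha hb hab
  have hprod : ∀ᵐ x ∂μ, ENNReal.ofReal (f x ^ a * g x ^ b) =
      ENNReal.ofReal (f x) ^ a * ENNReal.ofReal (g x) ^ b := by
    filter_upwards [hf0, hg0] with x hfx hgx
    rw [ENNReal.ofReal_mul (rpow_nonneg hfx a), ENNReal.ofReal_rpow_of_nonneg hfx ha,
      ENNReal.ofReal_rpow_of_nonneg hgx hb]
  rw [integral_eq_lintegral_of_nonneg_ae hf0 hf.1, integral_eq_lintegral_of_nonneg_ae hg0 hg.1,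
    integral_eq_lintegral_of_nonneg_ae, ENNReal.toReal_rpow, ENNReal.toReal_rpow,
    ← ENNReal.toReal_mul, lintegral_congr_ae hprod]
  · exact ENNReal.toReal_mono (ENNReal.mul_ne_top
      (ENNReal.rpow_ne_top_of_nonneg ha hf.lintegral_lt_top.ne)
      (ENNReal.rpow_ne_top_of_nonneg hb hg.lintegral_lt_top.ne)) hholder
  · filter_upwards [hf0, hg0] with x hfx hgx
    exact mul_nonneg (rpow_nonneg hfx a) (rpow_nonneg hgx b)
  · exact ((hf.1.aemeasurable.pow_const a).mul
      (hg.1.aemeasurable.pow_const b)).aestronglyMeasurable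

theorem MemLp.toReal_eLpNorm_rpow_eq_integral {E : Type*} [NormedAddCommGroup E] {g : α → E}
    (hp : 0 < p) (hg : MemLp g (ENNReal.ofReal p) μ) :
    (eLpNorm g (ENNReal.ofReal p) μ).toReal ^ p = ∫ x, ‖g x‖ ^ p ∂μ := by
  rw [hg.eLpNorm_eq_integral_rpow_norm (by simpa using hp) ENNReal.ofReal_ne_top,
    ENNReal.toReal_ofReal hp.le, ENNReal.toReal_ofReal (by positivity),
    rpow_inv_rpow (integral_nonneg fun x => by positivity) hp.ne']

theorem MemLp.integrable_rpow_of_nonneg {w : α → ℝ} (hp : 0 < p)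
    (hw : MemLp w (ENNReal.ofReal p) μ) (hw0 : 0 ≤ᵐ[μ] w) :
    Integrable (fun x => w x ^ p) μ := by
  have h := hw.integrable_norm_rpow (by simpa using hp) ENNReal.ofReal_ne_top
  rw [ENNReal.toReal_ofReal hp.le] at h
  refine h.congr ?_
  filter_upwards [hw0] with x hx
  rw [Real.norm_of_nonneg hx]

variable {f w : α → ℝ}

theorem integrable_rpow_sub_two_mul_sq (hp : 0 < p) (hf : AEStronglyMeasurable f μ)
    (hw : MemLp w (ENNReal.ofReal p) μ) (hfw : ∀ᵐ x ∂μ, |f x| ≤ w x) :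
    Integrable (fun x => w x ^ (p - 2) * f x ^ 2) μ := by
  refine (hw.integrable_rpow_of_nonneg hp (hfw.mono fun x hx => (abs_nonneg _).trans hx)).mono'
    ((hw.1.aemeasurable.pow_const _).mul (hf.aemeasurable.pow_const 2)).aestronglyMeasurable ?_
  filter_upwards [hfw] with x hx
  rw [Real.norm_of_nonneg (mul_nonneg (rpow_nonneg ((abs_nonneg _).trans hx) _) (sq_nonneg _))]
  exact rpow_sub_two_mul_sq_le hx

theorem toReal_eLpNorm_sq_le_mul_integral_rpow_sub_two_mul_sq (hp0 : 0 < p) (hp2 : p ≤ 2)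
    (hf : AEStronglyMeasurable f μ) (hw : MemLp w (ENNReal.ofReal p) μ)
    (hfw : ∀ᵐ x ∂μ, |f x| ≤ w x) :
    (eLpNorm f (ENNReal.ofReal p) μ).toReal ^ 2 ≤
      (eLpNorm w (ENNReal.ofReal p) μ).toReal ^ (2 - p) *
        ∫ x, w x ^ (p - 2) * f x ^ 2 ∂μ := by
  have hw0 : 0 ≤ᵐ[μ] w := hfw.mono fun x hx => (abs_nonneg _).trans hx
  have hfLp : MemLp f (ENNReal.ofReal p) μ := hw.of_le hf <| by
    filter_upwards [hfw, hw0] with x hx hx0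
    rwa [Real.norm_eq_abs, Real.norm_of_nonneg hx0]
  set N := (eLpNorm f (ENNReal.ofReal p) μ).toReal
  set W := (eLpNorm w (ENNReal.ofReal p) μ).toReal
  set I := ∫ x, w x ^ (p - 2) * f x ^ 2 ∂μ
  have hN0 : 0 ≤ N := ENNReal.toReal_nonneg
  have hW0 : 0 ≤ W := ENNReal.toReal_nonneg
  have hI0 : 0 ≤ I := integral_nonneg_of_ae <| hw0.mono fun x (hx : 0 ≤ w x) => by positivity
  have hN : N ^ p = ∫ x, |f x| ^ p ∂μ := hfLp.toReal_eLpNorm_rpow_eq_integral hp0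
  have hW : W ^ p = ∫ x, w x ^ p ∂μ :=
    (hw.toReal_eLpNorm_rpow_eq_integral hp0).trans <|
      integral_congr_ae <| hw0.mono fun x (hx : 0 ≤ w x) => by simp only [Real.norm_of_nonneg hx]
  have hholder : N ^ p ≤ I ^ (p / 2) * (W ^ p) ^ (1 - p / 2) := by
    rw [hN, hW, integral_congr_ae
      (hfw.mono fun x hx => abs_rpow_eq_rpow_sub_two_mul_sq_rpow_mul hp0 hx)]
    refine integral_rpow_mul_rpow_le (integrable_rpow_sub_two_mul_sq hp0 hf hw hfw)
      (hw.integrable_rpow_of_nonneg hp0 hw0) ?_ ?_ (by positivity) (by linarith) (by ring)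
    · exact hw0.mono fun x (hx : 0 ≤ w x) => by positivity
    · exact hw0.mono fun x (hx : 0 ≤ w x) => by positivity
  calc N ^ 2 = (N ^ p) ^ (2 / p) := by
        rw [← rpow_mul hN0, mul_div_cancel₀ _ hp0.ne', rpow_two]
    _ ≤ (I ^ (p / 2) * (W ^ p) ^ (1 - p / 2)) ^ (2 / p) := by gcongr
    _ = W ^ (2 - p) * I := by
        rw [mul_rpow (by positivity) (by positivity), ← rpow_mul hI0,
          ← rpow_mul (by positivity), ← rpow_mul hW0, show p / 2 * (2 / p) = 1 by field_simp,
          show p * ((1 - p / 2) * (2 / p)) = 2 - p by field_simp, rpow_one, mul_comm]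

end MeasureTheory

namespace Simon

noncomputable def phi (p t : ℝ) : ℝ := |t| ^ (p - 2) * t

variable {p : ℝ}

theorem phi_of_nonneg (hp : p ≠ 1) {s : ℝ} (hs : 0 ≤ s) : phi p s = s ^ (p - 1) := by
  rw [phi, abs_of_nonneg hs, ← rpow_add_one' hs (by contrapose! hp; linarith)]
  ring_nf

theorem measurable_phi : Measurable (phi p) := by
  unfold phi
  fun_prop

theorem phi_neg (t : ℝ) : phi p (-t) = -phi p t := by
  simp [phi]

theorem abs_phi (hp : p ≠ 1) (t : ℝ) : |phi p t| = |t| ^ (p - 1) := by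
  rw [← phi_of_nonneg hp (abs_nonneg t), phi, phi, abs_mul, abs_abs,
    abs_of_nonneg (rpow_nonneg (abs_nonneg t) _)]

theorem monotoneOn_rpow_sub_one_sub_mul (hp1 : 1 < p) (hp2 : p ≤ 2) (M : ℝ) :
    MonotoneOn (fun t => t ^ (p - 1) - (p - 1) * M ^ (p - 2) * t) (Icc 0 M) := by
  have hderiv : ∀ t : ℝ, 0 < t → HasDerivAt (fun t => t ^ (p - 1) - (p - 1) * M ^ (p - 2) * t)
      ((p - 1) * t ^ (p - 2) - (p - 1) * M ^ (p - 2)) t := fun t ht => by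
    have h := (hasDerivAt_rpow_const (p := p - 1) (Or.inl ht.ne')).sub
      ((hasDerivAt_id t).const_mul ((p - 1) * M ^ (p - 2)))
    exact h.congr_deriv (by rw [show p - 1 - 1 = p - 2 by ring, mul_one])
  refine monotoneOn_of_deriv_nonneg (convex_Icc 0 M) ?_ ?_ ?_
  · exact ((continuous_rpow_const (by linarith)).sub
      (continuous_const.mul continuous_id)).continuousOn
  · rw [interior_Icc]
    exact fun t ht => (hderiv t ht.1).differentiableAt.differentiableWithinAt
  · rw [interior_Icc]
    intro t ht
    have hM : M ^ (p - 2) ≤ t ^ (p - 2) := rpow_le_rpow_of_nonpos ht.1 ht.2.le (by linarith)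
    rw [(hderiv t ht.1).deriv]
    nlinarith

theorem monotoneOn_phi_sub_mul (hp1 : 1 < p) (hp2 : p ≤ 2) {M : ℝ} (hM : 0 ≤ M) :
    MonotoneOn (fun t => phi p t - (p - 1) * M ^ (p - 2) * t) (Icc (-M) M) := by
  set g := fun t => phi p t - (p - 1) * M ^ (p - 2) * t
  have hright : MonotoneOn g (Icc 0 M) :=
    (monotoneOn_rpow_sub_one_sub_mul hp1 hp2 M).congr fun t ht => by
      simp only [g, phi_of_nonneg hp1.ne' ht.1]
  have hleft : MonotoneOn g (Icc (-M) 0) := fun x hx y hy hxy => by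
    have h := hright ⟨neg_nonneg.2 hy.2, neg_le.1 hy.1⟩ ⟨neg_nonneg.2 hx.2, neg_le.1 hx.1⟩
      (neg_le_neg hxy)
    simp only [g, phi_neg] at h ⊢
    linarith
  rw [← Icc_union_Icc_eq_Icc (neg_nonpos.2 hM) hM]
  exact hleft.union_right hright (isGreatest_Icc (neg_nonpos.2 hM)) (isLeast_Icc hM)

theorem mul_sq_le_phi_sub_phi_mul_sub (hp1 : 1 < p) (hp2 : p ≤ 2) (a b : ℝ) :
    (p - 1) * (|a| + |b|) ^ (p - 2) * (a - b) ^ 2 ≤ (phi p a - phi p b) * (a - b) := by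
  have hmono := monotoneOn_phi_sub_mul hp1 hp2 (M := |a| + |b|) (by positivity)
  have ha : a ∈ Icc (-(|a| + |b|)) (|a| + |b|) :=
    ⟨by linarith [neg_abs_le a, abs_nonneg b], by linarith [le_abs_self a, abs_nonneg b]⟩
  have hb : b ∈ Icc (-(|a| + |b|)) (|a| + |b|) :=
    ⟨by linarith [neg_abs_le b, abs_nonneg a], by linarith [le_abs_self b, abs_nonneg a]⟩
  rcases le_total a b with hab | hab
  · have h := sub_nonneg.2 (hmono ha hb hab)
    nlinarith [mul_nonneg h (sub_nonneg.2 hab)]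
  · have h := sub_nonneg.2 (hmono hb ha hab)
    nlinarith [mul_nonneg h (sub_nonneg.2 hab)]

theorem abs_phi_sub_phi_mul_sub_le (hp : 1 < p) (a b : ℝ) :
    |(phi p a - phi p b) * (a - b)| ≤ 2 * (|a| + |b|) ^ p := by
  set M := |a| + |b|
  have hM : 0 ≤ M := by positivity
  have hphi : ∀ t, |t| ≤ M → |phi p t| ≤ M ^ (p - 1) := fun t ht =>
    (abs_phi hp.ne' t).trans_le (rpow_le_rpow (abs_nonneg t) ht (by linarith))
  calc |(phi p a - phi p b) * (a - b)| = |phi p a - phi p b| * |a - b| := abs_mul _ _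
    _ ≤ (M ^ (p - 1) + M ^ (p - 1)) * M :=
        mul_le_mul ((abs_sub _ _).trans (add_le_add (hphi a (by simp [M]))
          (hphi b (by simp [M])))) (abs_sub a b) (abs_nonneg _) (by positivity)
    _ = 2 * M ^ p := by
        rw [← two_mul, mul_assoc, ← rpow_add_one' hM (by linarith), sub_add_cancel]

theorem integrable_phi_sub_phi_mul_sub {Ω : Type*} [MeasurableSpace Ω] {μ : Measure Ω}
    (hp : 1 < p) {u v : Ω → ℝ} (hu : MemLp u (ENNReal.ofReal p) μ)
    (hv : MemLp v (ENNReal.ofReal p) μ) :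
    Integrable (fun x => (phi p (u x) - phi p (v x)) * (u x - v x)) μ := by
  have hw : Integrable (fun x => (|u x| + |v x|) ^ p) μ :=
    (hu.abs.add hv.abs).integrable_rpow_of_nonneg (by linarith)
      (ae_of_all _ fun x => by positivity)
  refine (hw.const_mul 2).mono' ?_ (ae_of_all _ fun x => abs_phi_sub_phi_mul_sub_le hp (u x) (v x))
  exact (((measurable_phi.comp_aemeasurable hu.1.aemeasurable).sub
    (measurable_phi.comp_aemeasurable hv.1.aemeasurable)).mul
    (hu.1.aemeasurable.sub hv.1.aemeasurable)).aestronglyMeasurable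

end Simon

theorem simon_integral_inequality_general {Ω : Type*} [MeasurableSpace Ω] (μ : Measure Ω)
    (p : ℝ) (hp1 : 1 < p) (hp2 : p ≤ 2) (u v : Ω → ℝ)
    (hu : MemLp u (ENNReal.ofReal p) μ) (hv : MemLp v (ENNReal.ofReal p) μ) :
    (∀ᵐ x ∂μ, 0 ≤ (|u x| ^ (p - 2) * u x - |v x| ^ (p - 2) * v x) * (u x - v x)) ∧
    Integrable (fun x => (|u x| ^ (p - 2) * u x - |v x| ^ (p - 2) * v x) * (u x - v x)) μ ∧
    (p - 1) * (eLpNorm (fun x => |u x| + |v x|) (ENNReal.ofReal p) μ).toReal ^ (p - 2) *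
        (eLpNorm (u - v) (ENNReal.ofReal p) μ).toReal ^ 2 ≤
      ∫ x, (|u x| ^ (p - 2) * u x - |v x| ^ (p - 2) * v x) * (u x - v x) ∂μ := by
  have hp0 : 0 < p := by linarith
  set w : Ω → ℝ := fun x => |u x| + |v x|
  have hw : MemLp w (ENNReal.ofReal p) μ := hu.abs.add hv.abs
  have hw0 : ∀ x, 0 ≤ w x := fun x => by positivity
  have huv : ∀ᵐ x ∂μ, |(u - v) x| ≤ w x := ae_of_all _ fun x => abs_sub _ _
  have hlow : ∀ x, (p - 1) * (w x ^ (p - 2) * (u x - v x) ^ 2) ≤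
      (Simon.phi p (u x) - Simon.phi p (v x)) * (u x - v x) := fun x => by
    rw [← mul_assoc]
    exact Simon.mul_sq_le_phi_sub_phi_mul_sub hp1 hp2 (u x) (v x)
  have hint := Simon.integrable_phi_sub_phi_mul_sub hp1 hu hv
  refine ⟨ae_of_all _ fun x => le_trans (by positivity) (hlow x), hint, ?_⟩
  set W := (eLpNorm w (ENNReal.ofReal p) μ).toReal
  have hW : W ^ (p - 2) * W ^ (2 - p) ≤ 1 :=
    neg_sub 2 p ▸ rpow_neg_mul_rpow_le_one ENNReal.toReal_nonneg (2 - p)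
  calc (p - 1) * W ^ (p - 2) * (eLpNorm (u - v) (ENNReal.ofReal p) μ).toReal ^ 2
      ≤ (p - 1) * W ^ (p - 2) * (W ^ (2 - p) * ∫ x, w x ^ (p - 2) * (u x - v x) ^ 2 ∂μ) := by
        gcongr
        exact toReal_eLpNorm_sq_le_mul_integral_rpow_sub_two_mul_sq hp0 hp2 (hu.1.sub hv.1) hw
          huv
    _ ≤ (p - 1) * ∫ x, w x ^ (p - 2) * (u x - v x) ^ 2 ∂μ := by
        rw [mul_assoc, ← mul_assoc (W ^ (p - 2))]
        exact mul_le_mul_of_nonneg_left (mul_le_of_le_one_left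
          (integral_nonneg fun x => mul_nonneg (rpow_nonneg (hw0 x) _) (sq_nonneg _)) hW)
          (by linarith)
    _ = ∫ x, (p - 1) * (w x ^ (p - 2) * (u x - v x) ^ 2) ∂μ := (integral_const_mul _ _).symm
    _ ≤ _ := integral_mono
          ((integrable_rpow_sub_two_mul_sq hp0 (hu.1.sub hv.1) hw huv).const_mul _) hint hlow

/-- Lemma 3.2 of the paper (Simon): for a measure space `(Ω, μ)`, `1 < p ≤ 2`, and
`u, v ∈ L^p(Ω, μ)` real-valued, not both `0` a.e., the integrand
`(φ_p(u) - φ_p(v))(u - v)` (with `φ_p t = |t|^(p-2) t`, `φ_p 0 = 0`) is a.e. nonnegative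
and integrable, and
`∫ (φ_p(u) - φ_p(v))(u - v) dμ ≥ (p-1) ‖|u|+|v|‖_p^(p-2) ‖u-v‖_p²`. -/
theorem simon_integral_inequality {Ω : Type*} [MeasurableSpace Ω] (μ : Measure Ω)
    (p : ℝ) (hp1 : 1 < p) (hp2 : p ≤ 2) (u v : Ω → ℝ)
    (hu : MemLp u (ENNReal.ofReal p) μ) (hv : MemLp v (ENNReal.ofReal p) μ)
    (hne : ¬ (u =ᵐ[μ] 0 ∧ v =ᵐ[μ] 0)) :
    (∀ᵐ x ∂μ, 0 ≤ (|u x| ^ (p - 2) * u x - |v x| ^ (p - 2) * v x) * (u x - v x)) ∧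
    Integrable (fun x => (|u x| ^ (p - 2) * u x - |v x| ^ (p - 2) * v x) * (u x - v x)) μ ∧
    (p - 1) * (eLpNorm (fun x => |u x| + |v x|) (ENNReal.ofReal p) μ).toReal ^ (p - 2) *
        (eLpNorm (u - v) (ENNReal.ofReal p) μ).toReal ^ 2 ≤
      ∫ x, (|u x| ^ (p - 2) * u x - |v x| ^ (p - 2) * v x) * (u x - v x) ∂μ :=
  simon_integral_inequality_general μ p hp1 hp2 u v hu hv
end

section
/- Let (Ω, μ) be a measure space and let p ≥ 2, with conjugate exponent p' = p/(p−1). Let u, v ∈ L^p(Ω, μ) be real-valued. Then the function φ_p(u) − φ_p(v) belongs to L^{p'}(Ω, μ) and ‖φ_p(u) − φ_p(v)‖_{L^{p'}} ≤ (p − 1) ‖ |u| + |v| ‖_{L^p}^{p−2} ‖u − v‖_{L^p}. -/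
/-!
By the mean value theorem, `φ_p(a) - φ_p(b)` is bounded pointwise by
`(p - 1) (|a| + |b|)^(p-2) |a - b|`, since `φ_p' = (p - 1) |·|^(p-2)`. Hölder's inequality with
exponents `p/(p-2)` and `p`, whose reciprocals add up to `1/p'`, then bounds the `L^{p'}` norm of
the right-hand side, and `‖(|u| + |v|)^(p-2)‖_{p/(p-2)} = ‖|u| + |v|‖_p^(p-2)`. For `p = 2`,
where the Hölder exponent `p/(p-2)` degenerates, `φ_p` is the identity.
-/

open MeasureTheory

theorem hasDerivAt_abs_rpow_mul_self {q : ℝ} (hq : 0 < q) (t : ℝ) :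
    HasDerivAt (fun s : ℝ => |s| ^ q * s) ((q + 1) * |t| ^ q) t := by
  rcases eq_or_ne t 0 with rfl | ht
  · rw [abs_zero, Real.zero_rpow hq.ne', mul_zero, hasDerivAt_iff_tendsto_slope]
    have hcont : Continuous (fun s : ℝ => |s| ^ q) :=
      (Real.continuous_rpow_const hq.le).comp continuous_abs
    have hlim := hcont.tendsto 0
    rw [abs_zero, Real.zero_rpow hq.ne'] at hlim
    refine (hlim.mono_left nhdsWithin_le_nhds).congr' ?_
    filter_upwards [self_mem_nhdsWithin] with s (hs : s ≠ 0)
    simp [slope_def_field, Real.zero_rpow hq.ne', hs]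
  · have habs : 0 < |t| := abs_pos.2 ht
    have hcomp : HasDerivAt (fun s : ℝ => |s| ^ q) (q * |t| ^ (q - 1) * SignType.sign t) t :=
      (Real.hasDerivAt_rpow_const (Or.inl habs.ne')).comp t (hasDerivAt_abs ht)
    refine (hcomp.mul (hasDerivAt_id t)).congr_deriv ?_
    have hsign : (SignType.sign t : ℝ) * t = |t| := by
      rcases ht.lt_or_gt with h | h
      · simp [sign_neg h, abs_of_neg h]
      · simp [sign_pos h, abs_of_pos h]
    rw [id_eq, mul_assoc _ _ t, hsign, mul_assoc, ← Real.rpow_add_one habs.ne', sub_add_cancel,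
      mul_one]
    ring

theorem abs_abs_rpow_mul_self_sub_le {q : ℝ} (hq : 0 < q) (a b : ℝ) :
    |(|a| ^ q * a - |b| ^ q * b)| ≤ (q + 1) * (|a| + |b|) ^ q * |a - b| := by
  have hderiv_le : ∀ t ∈ Set.uIcc a b, ‖(q + 1) * |t| ^ q‖ ≤ (q + 1) * (|a| + |b|) ^ q := by
    intro t ht
    have hmax : |t| ≤ max |a| |b| := by
      rcases Set.mem_uIcc.1 ht with ⟨h₁, h₂⟩ | ⟨h₁, h₂⟩
      · exact abs_le_max_abs_abs h₁ h₂
      · exact max_comm |b| |a| ▸ abs_le_max_abs_abs h₁ h₂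
    have hta : |t| ≤ |a| + |b| :=
      hmax.trans (max_le_add_of_nonneg (abs_nonneg _) (abs_nonneg _))
    rw [Real.norm_of_nonneg (by positivity)]
    gcongr
  simpa [Real.norm_eq_abs, mul_assoc] using
    (convex_uIcc a b).norm_image_sub_le_of_norm_hasDerivWithin_le
    (fun t _ => (hasDerivAt_abs_rpow_mul_self hq t).hasDerivWithinAt) hderiv_le
    Set.right_mem_uIcc Set.left_mem_uIcc

section

variable {Ω : Type*} [MeasurableSpace Ω] {μ : Measure Ω}

theorem eLpNorm_norm_rpow_mul_norm_le {E F : Type*} [NormedAddCommGroup E] [NormedAddCommGroup F]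
    {f : Ω → E} {g : Ω → F} {p q : ℝ} (hp : 0 < p) (hq : 0 < q)
    (hf : AEStronglyMeasurable f μ) (hg : AEStronglyMeasurable g μ) :
    eLpNorm (fun x => ‖f x‖ ^ q * ‖g x‖) (ENNReal.ofReal (p / (q + 1))) μ ≤
      eLpNorm f (ENNReal.ofReal p) μ ^ q * eLpNorm g (ENNReal.ofReal p) μ := by
  have hexp : (p / q).HolderTriple p (p / (q + 1)) :=
    ⟨by rw [inv_div, inv_div]; field_simp, div_pos hp hq, hp⟩
  have hholder := eLpNorm_le_eLpNorm_mul_eLpNorm'_of_norm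
    ((Real.continuous_rpow_const hq.le).comp_aestronglyMeasurable hf.norm) hg
    (fun a b => a * ‖b‖) 1 (.of_forall fun x => by simp) (hpqr := hexp.ennrealOfReal)
  rwa [ENNReal.coe_one, one_mul, eLpNorm_norm_rpow f hq,
    ← ENNReal.ofReal_mul (div_pos hp hq).le, div_mul_cancel₀ p hq.ne'] at hholder

theorem eLpNorm_abs_rpow_mul_self_sub_le {u v : Ω → ℝ} {p q : ℝ} (hp : 0 < p) (hq : 0 < q)
    (hu : AEStronglyMeasurable u μ) (hv : AEStronglyMeasurable v μ) :
    eLpNorm (fun x => |u x| ^ q * u x - |v x| ^ q * v x) (ENNReal.ofReal (p / (q + 1))) μ ≤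
      ENNReal.ofReal (q + 1) * (eLpNorm (fun x => |u x| + |v x|) (ENNReal.ofReal p) μ ^ q *
        eLpNorm (u - v) (ENNReal.ofReal p) μ) := by
  have hpointwise (x : Ω) : ‖|u x| ^ q * u x - |v x| ^ q * v x‖ ≤
      (q + 1) * (‖|u x| + |v x|‖ ^ q * ‖(u - v) x‖) := by
    simpa [Real.norm_eq_abs, abs_of_nonneg (add_nonneg (abs_nonneg (u x)) (abs_nonneg (v x))),
      mul_assoc] using abs_abs_rpow_mul_self_sub_le hq (u x) (v x)
  calc _ ≤ eLpNorm ((q + 1) • fun x => ‖|u x| + |v x|‖ ^ q * ‖(u - v) x‖)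
        (ENNReal.ofReal (p / (q + 1))) μ := eLpNorm_mono_real hpointwise
    _ ≤ ‖q + 1‖ₑ * eLpNorm (fun x => ‖|u x| + |v x|‖ ^ q * ‖(u - v) x‖)
        (ENNReal.ofReal (p / (q + 1))) μ := eLpNorm_const_smul_le
    _ ≤ _ := by
      rw [Real.enorm_eq_ofReal (by linarith)]
      gcongr
      exact eLpNorm_norm_rpow_mul_norm_le hp hq (hu.norm.add hv.norm) (hu.sub hv)

end

/-- Lemma 3.3 of the paper (Bartsch–Liu): for a measure space `(Ω, μ)`, `p ≥ 2` with
conjugate exponent `p' = p/(p-1)`, and real-valued `u, v ∈ L^p(Ω, μ)`, the function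
`φ_p(u) - φ_p(v)` (with `φ_p t = |t|^(p-2) t`, `φ_p 0 = 0`) belongs to `L^{p'}(Ω, μ)` and
`‖φ_p(u) - φ_p(v)‖_{p'} ≤ (p-1) ‖|u|+|v|‖_p^(p-2) ‖u-v‖_p`. -/
theorem bartsch_liu_inequality {Ω : Type*} [MeasurableSpace Ω] (μ : Measure Ω)
    (p : ℝ) (hp : 2 ≤ p) (u v : Ω → ℝ)
    (hu : MemLp u (ENNReal.ofReal p) μ) (hv : MemLp v (ENNReal.ofReal p) μ) :
    MemLp (fun x => |u x| ^ (p - 2) * u x - |v x| ^ (p - 2) * v x)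
        (ENNReal.ofReal (p / (p - 1))) μ ∧
      (eLpNorm (fun x => |u x| ^ (p - 2) * u x - |v x| ^ (p - 2) * v x)
            (ENNReal.ofReal (p / (p - 1))) μ).toReal ≤
        (p - 1) * (eLpNorm (fun x => |u x| + |v x|) (ENNReal.ofReal p) μ).toReal ^ (p - 2) *
          (eLpNorm (u - v) (ENNReal.ofReal p) μ).toReal := by
  rcases hp.eq_or_lt with rfl | hp₂
  · norm_num at hu hv ⊢
    exact ⟨hu.sub hv, le_rfl⟩
  have hq : 0 < p - 2 := by linarith
  have hbound := eLpNorm_abs_rpow_mul_self_sub_le (μ := μ) (by linarith) hq hu.1 hv.1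
  rw [show p - 2 + 1 = p - 1 by ring] at hbound
  have hfinite : ENNReal.ofReal (p - 1) *
      (eLpNorm (fun x => |u x| + |v x|) (ENNReal.ofReal p) μ ^ (p - 2) *
        eLpNorm (u - v) (ENNReal.ofReal p) μ) ≠ ⊤ := by
    finiteness [(hu.abs.add hv.abs).eLpNorm_ne_top, (hu.sub hv).eLpNorm_ne_top]
  have hφ : Continuous fun t : ℝ => |t| ^ (p - 2) * t :=
    ((Real.continuous_rpow_const hq.le).comp continuous_abs).mul continuous_id
  refine ⟨⟨(hφ.comp_aestronglyMeasurable hu.1).sub (hφ.comp_aestronglyMeasurable hv.1),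
    hbound.trans_lt hfinite.lt_top⟩, (ENNReal.toReal_mono hfinite hbound).trans_eq ?_⟩
  rw [ENNReal.toReal_mul, ENNReal.toReal_mul, ENNReal.toReal_ofReal (by linarith),
    ← ENNReal.toReal_rpow, mul_assoc]
end

section
/- Let (Ω, μ) be a measure space, N ≥ 1, and 1 < p ≤ 2. Then there exists a constant C > 0, depending only on p, such that for all F, G ∈ L^p(Ω, μ; ℝ^N), not both equal to 0 almost everywhere, one has ∫_Ω (φ_p(F(x)) − φ_p(G(x))) · (F(x) − G(x)) dμ(x) ≥ C (‖F‖_{L^p} + ‖G‖_{L^p})^{p−2} ‖F − G‖_{L^p}^2, where the integrand is nonnegative and integrable. -/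
/-!
Pointwise, with `s = ‖a‖`, `t = ‖b‖` and `x = ⟪a, b⟫`, the pairing `⟪φ_p a - φ_p b, a - b⟫`
equals `s ^ (p - 2) * (s ^ 2 - x) + t ^ (p - 2) * (t ^ 2 - x)`, and its excess over
`(p - 1) (s + t) ^ (p - 2) ‖a - b‖ ^ 2` is nonincreasing in `x ≤ s t`. The worst case `x = s t`
is the one-dimensional estimate `(p - 1) (s + t) ^ (p - 2) (s - t) ^ 2 ≤ (s ^ (p-1) - t ^ (p-1)) (s - t)`,
a consequence of the concavity of `r ↦ r ^ (p - 1)`.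

Integrating, it remains to bound `∫ |F - G| ^ 2 W ^ (p - 2)` from below, where `W = |F| + |G|`.
Hölder's inequality with weights `p / 2` and `(2 - p) / 2`, applied to
`U ^ p = (U ^ 2 W ^ (p - 2)) ^ (p / 2) (W ^ p) ^ ((2 - p) / 2)` for `U ≤ W`, gives
`‖U‖_p ^ 2 ≤ (∫ U ^ 2 W ^ (p - 2)) ‖W‖_p ^ (2 - p)`; together with `‖W‖_p ≤ ‖F‖_p + ‖G‖_p` this
yields the inequality with `C = p - 1`.
-/

open MeasureTheory
open scoped RealInnerProductSpace ENNReal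

namespace Real

theorem sq_mul_rpow_sub_two_rpow_mul_rpow_rpow {p u w : ℝ} (hp : 0 < p) (hu : 0 ≤ u)
    (huw : u ≤ w) : (u ^ 2 * w ^ (p - 2)) ^ (p / 2) * (w ^ p) ^ ((2 - p) / 2) = u ^ p := by
  rcases (hu.trans huw).eq_or_lt with rfl | hw
  · obtain rfl : u = 0 := le_antisymm huw hu
    simp [zero_rpow hp.ne', zero_rpow (by positivity : p / 2 ≠ 0)]
  rw [mul_rpow (by positivity) (by positivity), ← rpow_natCast, ← rpow_mul hu,
    ← rpow_mul hw.le, ← rpow_mul hw.le, mul_assoc, ← rpow_add hw]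
  ring_nf
  simp

theorem sq_mul_rpow_sub_two_le_rpow {p u w : ℝ} (hu : 0 ≤ u) (huw : u ≤ w) :
    u ^ 2 * w ^ (p - 2) ≤ w ^ p := by
  rcases (hu.trans huw).eq_or_lt with rfl | hw
  · obtain rfl : u = 0 := le_antisymm huw hu
    simp [rpow_nonneg le_rfl]
  calc u ^ 2 * w ^ (p - 2) ≤ w ^ 2 * w ^ (p - 2) := by gcongr
    _ = w ^ p := by rw [← rpow_natCast, ← rpow_add hw]; ring_nf

theorem rpow_le_add_mul_rpow_sub_one_mul_sub {q s t : ℝ} (hq0 : 0 ≤ q) (hq1 : q ≤ 1)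
    (hs : 0 < s) (ht : 0 ≤ t) : t ^ q ≤ s ^ q + q * s ^ (q - 1) * (t - s) := by
  have hbern := rpow_one_add_le_one_add_mul_self (s := t / s - 1)
    (by linarith [div_nonneg ht hs.le]) hq0 hq1
  rw [add_sub_cancel, div_rpow ht hs.le, div_le_iff₀ (rpow_pos_of_pos hs q)] at hbern
  calc t ^ q ≤ (1 + q * (t / s - 1)) * s ^ q := hbern
    _ = s ^ q + q * s ^ (q - 1) * (t - s) := by
      rw [rpow_sub_one hs.ne']; field_simp

theorem sub_one_mul_add_rpow_mul_sq_le {p s t : ℝ} (hp1 : 1 < p) (hp2 : p ≤ 2)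
    (hs : 0 ≤ s) (ht : 0 ≤ t) :
    (p - 1) * (s + t) ^ (p - 2) * (s - t) ^ 2 ≤ (s ^ (p - 1) - t ^ (p - 1)) * (s - t) := by
  wlog hts : t ≤ s generalizing s t
  · have := this ht hs (le_of_not_ge hts)
    rw [add_comm]; linarith
  rcases hts.eq_or_lt with rfl | hts
  · simp
  have hs0 : 0 < s := ht.trans_lt hts
  have htangent := rpow_le_add_mul_rpow_sub_one_mul_sub (by linarith) (by linarith) hs0 ht
    (q := p - 1)
  have hmono : (s + t) ^ (p - 2) ≤ s ^ (p - 2) :=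
    rpow_le_rpow_of_nonpos hs0 (by linarith) (by linarith)
  rw [show p - 1 - 1 = p - 2 by ring] at htangent
  have hst : 0 ≤ s - t := by linarith
  nlinarith [mul_le_mul_of_nonneg_right hmono
    (mul_nonneg (by linarith : (0:ℝ) ≤ p - 1) (mul_nonneg hst hst))]

theorem rpow_sub_two_sub_mul_sub_le {p c s t x : ℝ} (hp2 : p ≤ 2) (hs : 0 ≤ s) (ht : 0 ≤ t)
    (hc : c ≤ (s + t) ^ (p - 2)) (hx : |x| ≤ s * t) :
    (s ^ (p - 2) - c) * (s ^ 2 - s * t) ≤ (s ^ (p - 2) - c) * (s ^ 2 - x) := by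
  rcases hs.eq_or_lt with rfl | hs
  · simp [show x = 0 by simpa using hx]
  have hmono : (s + t) ^ (p - 2) ≤ s ^ (p - 2) :=
    rpow_le_rpow_of_nonpos hs (by linarith) (by linarith)
  exact mul_le_mul_of_nonneg_left (by linarith [(abs_le.mp hx).2]) (by linarith)

end Real

section InnerProductSpace

variable {E : Type*} [NormedAddCommGroup E] [InnerProductSpace ℝ E]

-- The paper's `φ_p`; `phi p 0 = 0` whatever junk value `0 ^ (p - 2)` takes.
noncomputable def phi (p : ℝ) (a : E) : E := ‖a‖ ^ (p - 2) • a

theorem norm_phi {p : ℝ} (hp : p ≠ 1) (a : E) : ‖phi p a‖ = ‖a‖ ^ (p - 1) := by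
  rw [phi, norm_smul, Real.norm_of_nonneg (by positivity),
    ← Real.rpow_add_one' (norm_nonneg a) (by contrapose! hp; linarith)]
  ring_nf

theorem inner_phi_sub_phi_eq (p : ℝ) (a b : E) :
    ⟪phi p a - phi p b, a - b⟫ =
      ‖a‖ ^ (p - 2) * (‖a‖ ^ 2 - ⟪a, b⟫) + ‖b‖ ^ (p - 2) * (‖b‖ ^ 2 - ⟪a, b⟫) := by
  simp only [phi, inner_sub_left, inner_sub_right, real_inner_smul_left,
    real_inner_self_eq_norm_sq, real_inner_comm a b]
  ring

theorem sub_one_mul_rpow_mul_norm_sub_sq_le_inner_phi_sub_phi {p : ℝ} (hp1 : 1 < p) (hp2 : p ≤ 2)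
    (a b : E) :
    (p - 1) * (‖a‖ + ‖b‖) ^ (p - 2) * ‖a - b‖ ^ 2 ≤ ⟪phi p a - phi p b, a - b⟫ := by
  have hx : |⟪a, b⟫| ≤ ‖a‖ * ‖b‖ := abs_real_inner_le_norm a b
  have hc : (p - 1) * (‖a‖ + ‖b‖) ^ (p - 2) ≤ (‖a‖ + ‖b‖) ^ (p - 2) :=
    mul_le_of_le_one_left (by positivity) (by linarith)
  have ha := Real.rpow_sub_two_sub_mul_sub_le hp2 (norm_nonneg a) (norm_nonneg b) hc hx
  have hb := Real.rpow_sub_two_sub_mul_sub_le hp2 (norm_nonneg b) (norm_nonneg a)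
    (add_comm ‖a‖ ‖b‖ ▸ hc) (by rwa [mul_comm])
  have h1d := Real.sub_one_mul_add_rpow_mul_sq_le hp1 hp2 (norm_nonneg a) (norm_nonneg b)
  have ea : ‖a‖ ^ (p - 1) = ‖a‖ ^ (p - 2) * ‖a‖ := by
    rw [← Real.rpow_add_one' (norm_nonneg a) (by linarith)]; congr 1; ring
  have eb : ‖b‖ ^ (p - 1) = ‖b‖ ^ (p - 2) * ‖b‖ := by
    rw [← Real.rpow_add_one' (norm_nonneg b) (by linarith)]; congr 1; ring
  rw [add_comm ‖b‖ ‖a‖] at hb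
  rw [inner_phi_sub_phi_eq, norm_sub_sq_real]
  linear_combination ha + hb + h1d + (‖a‖ - ‖b‖) * ea - (‖a‖ - ‖b‖) * eb

theorem abs_inner_phi_sub_phi_le {p : ℝ} (hp1 : 1 < p) (a b : E) :
    |⟪phi p a - phi p b, a - b⟫| ≤ 2 * (‖a‖ + ‖b‖) ^ p := by
  calc |⟪phi p a - phi p b, a - b⟫| ≤ ‖phi p a - phi p b‖ * ‖a - b‖ := abs_real_inner_le_norm _ _
    _ ≤ (‖a‖ ^ (p - 1) + ‖b‖ ^ (p - 1)) * (‖a‖ + ‖b‖) := by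
      gcongr
      · exact (norm_sub_le _ _).trans_eq (by rw [norm_phi hp1.ne', norm_phi hp1.ne'])
      · exact norm_sub_le a b
    _ ≤ (2 * (‖a‖ + ‖b‖) ^ (p - 1)) * (‖a‖ + ‖b‖) := by
      gcongr
      linarith [Real.rpow_le_rpow (norm_nonneg a) (le_add_of_nonneg_right (norm_nonneg b))
          (by linarith : 0 ≤ p - 1),
        Real.rpow_le_rpow (norm_nonneg b) (le_add_of_nonneg_left (norm_nonneg a))
          (by linarith : 0 ≤ p - 1)]
    _ = 2 * (‖a‖ + ‖b‖) ^ p := by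
      rw [mul_assoc, ← Real.rpow_add_one' (by positivity) (by linarith)]
      ring_nf

theorem integrable_inner_phi_sub_phi {Ω : Type*} [MeasurableSpace Ω] {μ : Measure Ω} {p : ℝ}
    (hp1 : 1 < p) {F G : Ω → E} (hF : MemLp F (ENNReal.ofReal p) μ)
    (hG : MemLp G (ENNReal.ofReal p) μ) :
    Integrable (fun x => ⟪phi p (F x) - phi p (G x), F x - G x⟫) μ := by
  have hphi : ∀ {H : Ω → E}, AEStronglyMeasurable H μ →
      AEStronglyMeasurable (fun x => phi p (H x)) μ := fun hH =>
    (hH.norm.aemeasurable.pow_const _).aestronglyMeasurable.smul hH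
  have hbound : Integrable (fun x => 2 * (‖F x‖ + ‖G x‖) ^ p) μ := by
    have := (hF.norm.add hG.norm).integrable_norm_rpow (by simpa using hp1.trans' one_pos)
      ENNReal.ofReal_ne_top
    refine (this.const_mul 2).congr (ae_of_all _ fun x => ?_)
    simp only [Pi.add_apply, ENNReal.toReal_ofReal (by linarith : 0 ≤ p),
      Real.norm_of_nonneg (by positivity : 0 ≤ ‖F x‖ + ‖G x‖)]
  refine hbound.mono' (((hphi hF.1).sub (hphi hG.1)).inner (hF.1.sub hG.1))
    (ae_of_all _ fun x => ?_)
  exact (Real.norm_eq_abs _).trans_le (abs_inner_phi_sub_phi_le hp1 (F x) (G x))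

end InnerProductSpace

section Lp

variable {α : Type*} [MeasurableSpace α] {μ : Measure α}

theorem integral_rpow_mul_rpow_le {f g : α → ℝ} (hf0 : 0 ≤ᵐ[μ] f) (hg0 : 0 ≤ᵐ[μ] g)
    (hf : Integrable f μ) (hg : Integrable g μ) {p q : ℝ} (hp : 0 ≤ p) (hq : 0 ≤ q)
    (hpq : p + q = 1) :
    ∫ x, f x ^ p * g x ^ q ∂μ ≤ (∫ x, f x ∂μ) ^ p * (∫ x, g x ∂μ) ^ q := by
  have hofReal : ∀ᵐ x ∂μ, ENNReal.ofReal (f x ^ p * g x ^ q) =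
      ENNReal.ofReal (f x) ^ p * ENNReal.ofReal (g x) ^ q := by
    filter_upwards [hf0, hg0] with x hfx hgx
    rw [ENNReal.ofReal_mul (Real.rpow_nonneg hfx p), ENNReal.ofReal_rpow_of_nonneg hfx hp,
      ENNReal.ofReal_rpow_of_nonneg hgx hq]
  have hfin : (∫⁻ x, ENNReal.ofReal (f x) ∂μ) ^ p * (∫⁻ x, ENNReal.ofReal (g x) ∂μ) ^ q ≠ ∞ :=
    ENNReal.mul_ne_top (ENNReal.rpow_ne_top_of_nonneg hp hf.lintegral_lt_top.ne)
      (ENNReal.rpow_ne_top_of_nonneg hq hg.lintegral_lt_top.ne)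
  have hm : AEStronglyMeasurable (fun x => f x ^ p * g x ^ q) μ :=
    ((hf.1.aemeasurable.pow_const p).mul (hg.1.aemeasurable.pow_const q)).aestronglyMeasurable
  have h0 : 0 ≤ᵐ[μ] fun x => f x ^ p * g x ^ q := by
    filter_upwards [hf0, hg0] with x hfx hgx
    exact mul_nonneg (Real.rpow_nonneg hfx p) (Real.rpow_nonneg hgx q)
  rw [integral_eq_lintegral_of_nonneg_ae hf0 hf.1, integral_eq_lintegral_of_nonneg_ae hg0 hg.1,
    integral_eq_lintegral_of_nonneg_ae h0 hm,
    lintegral_congr_ae hofReal, ENNReal.toReal_rpow, ENNReal.toReal_rpow, ← ENNReal.toReal_mul]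
  exact ENNReal.toReal_mono hfin (ENNReal.lintegral_mul_norm_pow_le hf.1.aemeasurable.ennreal_ofReal
    hg.1.aemeasurable.ennreal_ofReal hp hq hpq)

variable {E : Type*} [NormedAddCommGroup E]

theorem toReal_eLpNorm_sq_le_integral_mul {f : α → E} {g : α → ℝ} {p : ℝ} (hp0 : 0 < p)
    (hp2 : p ≤ 2) (hf : AEStronglyMeasurable f μ) (hg : MemLp g (ENNReal.ofReal p) μ)
    (hfg : ∀ x, ‖f x‖ ≤ g x) :
    (eLpNorm f (ENNReal.ofReal p) μ).toReal ^ 2 ≤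
      (∫ x, ‖f x‖ ^ 2 * g x ^ (p - 2) ∂μ) * (eLpNorm g (ENNReal.ofReal p) μ).toReal ^ (2 - p) := by
  have hg0 : ∀ x, 0 ≤ g x := fun x => (norm_nonneg _).trans (hfg x)
  have hq0 : ENNReal.ofReal p ≠ 0 := by simpa using hp0
  have hq : (ENNReal.ofReal p).toReal = p := ENNReal.toReal_ofReal hp0.le
  have hfLp : MemLp f (ENNReal.ofReal p) μ :=
    hg.of_le hf (ae_of_all _ fun x => (hfg x).trans (le_abs_self _))
  have hgp : Integrable (fun x => g x ^ p) μ := by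
    simpa [hq, Real.norm_of_nonneg (hg0 _)] using hg.integrable_norm_rpow hq0 ENNReal.ofReal_ne_top
  have hKm : AEStronglyMeasurable (fun x => ‖f x‖ ^ 2 * g x ^ (p - 2)) μ :=
    (hf.norm.pow 2).mul (hg.1.aemeasurable.pow_const _).aestronglyMeasurable
  have hK : Integrable (fun x => ‖f x‖ ^ 2 * g x ^ (p - 2)) μ :=
    hgp.mono' hKm (ae_of_all _ fun x => by
      rw [Real.norm_of_nonneg (by have := Real.rpow_nonneg (hg0 x) (p - 2); positivity)]
      exact Real.sq_mul_rpow_sub_two_le_rpow (norm_nonneg _) (hfg x))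
  set If := ∫ x, ‖f x‖ ^ p ∂μ
  set Ig := ∫ x, g x ^ p ∂μ
  set k := ∫ x, ‖f x‖ ^ 2 * g x ^ (p - 2) ∂μ
  have hIf : 0 ≤ If := integral_nonneg fun x => by positivity
  have hIg : 0 ≤ Ig := integral_nonneg fun x => Real.rpow_nonneg (hg0 x) p
  have hk : 0 ≤ k := integral_nonneg fun x => by
    have := Real.rpow_nonneg (hg0 x) (p - 2); positivity
  have hHolder : If ≤ k ^ (p / 2) * Ig ^ ((2 - p) / 2) := by
    calc If = ∫ x, (‖f x‖ ^ 2 * g x ^ (p - 2)) ^ (p / 2) * (g x ^ p) ^ ((2 - p) / 2) ∂μ :=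
          integral_congr_ae (ae_of_all _ fun x =>
            (Real.sq_mul_rpow_sub_two_rpow_mul_rpow_rpow hp0 (norm_nonneg _) (hfg x)).symm)
      _ ≤ k ^ (p / 2) * Ig ^ ((2 - p) / 2) :=
          integral_rpow_mul_rpow_le (ae_of_all _ fun x => by
              have := Real.rpow_nonneg (hg0 x) (p - 2); positivity)
            (ae_of_all _ fun x => Real.rpow_nonneg (hg0 x) p) hK hgp (by positivity)
            (by linarith) (by ring)
  have hnormf : (eLpNorm f (ENNReal.ofReal p) μ).toReal = If ^ p⁻¹ := by
    rw [hfLp.eLpNorm_eq_integral_rpow_norm hq0 ENNReal.ofReal_ne_top, hq,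
      ENNReal.toReal_ofReal (by positivity)]
  have hnormg : (eLpNorm g (ENNReal.ofReal p) μ).toReal = Ig ^ p⁻¹ := by
    rw [hg.eLpNorm_eq_integral_rpow_norm hq0 ENNReal.ofReal_ne_top, hq,
      ENNReal.toReal_ofReal (by positivity)]
    simp only [Real.norm_of_nonneg (hg0 _), Ig]
  rw [hnormf, hnormg]
  calc (If ^ p⁻¹) ^ 2 = If ^ (2 / p) := by
        rw [← Real.rpow_natCast, ← Real.rpow_mul hIf]; ring_nf
    _ ≤ (k ^ (p / 2) * Ig ^ ((2 - p) / 2)) ^ (2 / p) := by gcongr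
    _ = k * (Ig ^ p⁻¹) ^ (2 - p) := by
        rw [Real.mul_rpow (by positivity) (by positivity), ← Real.rpow_mul hk,
          ← Real.rpow_mul hIg, ← Real.rpow_mul hIg, show p / 2 * (2 / p) = 1 by field_simp,
          Real.rpow_one]
        ring_nf

theorem rpow_sub_two_mul_toReal_eLpNorm_sq_le_integral {f : α → E} {g : α → ℝ} {p b : ℝ}
    (hp0 : 0 < p) (hp2 : p ≤ 2) (hf : AEStronglyMeasurable f μ)
    (hg : MemLp g (ENNReal.ofReal p) μ) (hfg : ∀ x, ‖f x‖ ≤ g x)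
    (hb : (eLpNorm g (ENNReal.ofReal p) μ).toReal ≤ b) :
    b ^ (p - 2) * (eLpNorm f (ENNReal.ofReal p) μ).toReal ^ 2 ≤
      ∫ x, ‖f x‖ ^ 2 * g x ^ (p - 2) ∂μ := by
  have hk : 0 ≤ ∫ x, ‖f x‖ ^ 2 * g x ^ (p - 2) ∂μ := integral_nonneg fun x => by
    have := Real.rpow_nonneg ((norm_nonneg _).trans (hfg x)) (p - 2); positivity
  have hfg' : (eLpNorm f (ENNReal.ofReal p) μ).toReal ≤ (eLpNorm g (ENNReal.ofReal p) μ).toReal :=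
    ENNReal.toReal_mono hg.eLpNorm_ne_top (eLpNorm_mono_real hfg)
  rcases (ENNReal.toReal_nonneg.trans hb).eq_or_lt with rfl | hb0
  · have h0 : (eLpNorm f (ENNReal.ofReal p) μ).toReal = 0 :=
      le_antisymm (hfg'.trans hb) ENNReal.toReal_nonneg
    simpa [h0] using hk
  calc b ^ (p - 2) * (eLpNorm f (ENNReal.ofReal p) μ).toReal ^ 2
      ≤ b ^ (p - 2) * ((∫ x, ‖f x‖ ^ 2 * g x ^ (p - 2) ∂μ) *
          (eLpNorm g (ENNReal.ofReal p) μ).toReal ^ (2 - p)) := by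
        gcongr
        exact toReal_eLpNorm_sq_le_integral_mul hp0 hp2 hf hg hfg
    _ ≤ b ^ (p - 2) * ((∫ x, ‖f x‖ ^ 2 * g x ^ (p - 2) ∂μ) * b ^ (2 - p)) := by
        gcongr
    _ = ∫ x, ‖f x‖ ^ 2 * g x ^ (p - 2) ∂μ := by
        rw [mul_left_comm, ← Real.rpow_add hb0]
        simp

end Lp

/-- Case `p ≤ 2` of inequality (3.5) of the paper: for `1 < p ≤ 2` there is a constant
`C > 0`, depending only on `p`, such that for every measure space `(Ω, μ)`, every `N ≥ 1`,
and all `F, G ∈ L^p(Ω, μ; ℝ^N)` not both `0` a.e., the integrand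
`(φ_p(F) - φ_p(G)) · (F - G)` (with `φ_p ξ = |ξ|^(p-2) ξ`, `φ_p 0 = 0`) is a.e. nonnegative
and integrable, and
`∫ (φ_p(F) - φ_p(G)) · (F - G) dμ ≥ C (‖F‖_p + ‖G‖_p)^(p-2) ‖F - G‖_p²`. -/
theorem vector_field_inequality_p_le_two (p : ℝ) (hp1 : 1 < p) (hp2 : p ≤ 2) :
    ∃ C : ℝ, 0 < C ∧
      ∀ (Ω : Type) [MeasurableSpace Ω], ∀ (μ : Measure Ω) (N : ℕ), 1 ≤ N →
        ∀ F G : Ω → EuclideanSpace ℝ (Fin N),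
          MemLp F (ENNReal.ofReal p) μ → MemLp G (ENNReal.ofReal p) μ →
          ¬ (F =ᵐ[μ] 0 ∧ G =ᵐ[μ] 0) →
          (∀ᵐ x ∂μ,
            0 ≤ ⟪(‖F x‖ ^ (p - 2)) • F x - (‖G x‖ ^ (p - 2)) • G x, F x - G x⟫) ∧
          Integrable
            (fun x => ⟪(‖F x‖ ^ (p - 2)) • F x - (‖G x‖ ^ (p - 2)) • G x, F x - G x⟫) μ ∧
          C * ((eLpNorm F (ENNReal.ofReal p) μ).toReal +
                (eLpNorm G (ENNReal.ofReal p) μ).toReal) ^ (p - 2) *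
              (eLpNorm (F - G) (ENNReal.ofReal p) μ).toReal ^ 2 ≤
            ∫ x, ⟪(‖F x‖ ^ (p - 2)) • F x - (‖G x‖ ^ (p - 2)) • G x, F x - G x⟫ ∂μ := by
  refine ⟨p - 1, by linarith, fun Ω _ μ N _ F G hF hG _ => ?_⟩
  have hpoint := fun x => sub_one_mul_rpow_mul_norm_sub_sq_le_inner_phi_sub_phi hp1 hp2 (F x) (G x)
  have hlower : ∀ x, 0 ≤ (p - 1) * (‖F x‖ + ‖G x‖) ^ (p - 2) * ‖F x - G x‖ ^ 2 := fun x => by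
    have := Real.rpow_nonneg (by positivity : 0 ≤ ‖F x‖ + ‖G x‖) (p - 2)
    have : 0 ≤ p - 1 := by linarith
    positivity
  have hint := integrable_inner_phi_sub_phi hp1 hF hG
  have hsum : (eLpNorm (fun x => ‖F x‖ + ‖G x‖) (ENNReal.ofReal p) μ).toReal ≤
      (eLpNorm F (ENNReal.ofReal p) μ).toReal + (eLpNorm G (ENNReal.ofReal p) μ).toReal := by
    have h := eLpNorm_add_le hF.1.norm hG.1.norm (p := ENNReal.ofReal p) (by simpa using hp1.le)
    rw [eLpNorm_norm, eLpNorm_norm] at h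
    rw [← ENNReal.toReal_add hF.eLpNorm_ne_top hG.eLpNorm_ne_top]
    exact ENNReal.toReal_mono (by finiteness) h
  refine ⟨ae_of_all _ fun x => (hlower x).trans (hpoint x), hint, ?_⟩
  calc (p - 1) * ((eLpNorm F (ENNReal.ofReal p) μ).toReal +
          (eLpNorm G (ENNReal.ofReal p) μ).toReal) ^ (p - 2) *
          (eLpNorm (F - G) (ENNReal.ofReal p) μ).toReal ^ 2
      ≤ (p - 1) * ∫ x, ‖(F - G) x‖ ^ 2 * (‖F x‖ + ‖G x‖) ^ (p - 2) ∂μ := by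
        rw [mul_assoc]
        gcongr
        exact rpow_sub_two_mul_toReal_eLpNorm_sq_le_integral (by linarith) hp2 (hF.1.sub hG.1)
          (hF.norm.add hG.norm) (fun x => norm_sub_le _ _) hsum
    _ = ∫ x, (p - 1) * (‖F x‖ + ‖G x‖) ^ (p - 2) * ‖F x - G x‖ ^ 2 ∂μ := by
        rw [← integral_const_mul]
        congr 1 with x
        simp only [Pi.sub_apply]
        ring
    _ ≤ _ := integral_mono_of_nonneg (ae_of_all _ hlower) hint (ae_of_all _ hpoint)
end

section
/- Let Ω ⊂ ℝ^N be a bounded open set and set d(x) = dist(x, ℝ^N \\ Ω) for x ∈ Ω. Let p > 1, s ≥ 1 and 0 < t < 1 satisfy ts < p, and if p < N assume moreover (s − ts)/(p − ts) ≤ p*/p where p* = Np/(N−p). Suppose there are constants C₀ > 0 and C₁ > 0 such that every continuously differentiable function u : ℝ^N → ℝ with compact support contained in Ω satisfies the Hardy inequality ‖u/d‖_{L^p(Ω)} ≤ C₀ ‖∇u‖_{L^p(Ω)} and the Sobolev-type inequality ‖u‖_{L^{sp(1−t)/(p−ts)}(Ω)} ≤ C₁ ‖∇u‖_{L^p(Ω)}.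 Then every such u satisfies ‖u · d^{−t}‖_{L^s(Ω)} ≤ C₀^t C₁^{1−t} ‖∇u‖_{L^p(Ω)}. -/
/-!
Pointwise `|u| d^(-t) = |u / d|^t |u|^(1 - t)`, so the interpolation (Hölder) inequality
`‖F^t G^(1-t)‖_s ≤ ‖F‖_p^t ‖G‖_q^(1-t)` for `1/s = t/p + (1-t)/q`, applied with `F = |u/d|`,
`G = |u|` and `q = sp(1-t)/(p-ts)`, bounds `‖u d^(-t)‖_s` by `‖u/d‖_p^t ‖u‖_q^(1-t)`; the Hardy and
Sobolev inequalities bound the two factors. Hölder needs `u/d ∈ L^p`: since `d > 0` on the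
compact set `tsupport u ⊆ Ω`, the quotient `u/d` is continuous with compact support.
-/

open MeasureTheory

-- Also where `d = 0`: both sides vanish, as `0 ^ (-t) = 0` and `u / 0 = 0`.
theorem abs_mul_rpow_neg_eq_abs_div_rpow_mul_abs_rpow {u d t : ℝ} (hd : 0 ≤ d) (ht : t ≠ 0) :
    |u * d ^ (-t)| = |u / d| ^ t * |u| ^ (1 - t) := by
  rcases hd.eq_or_lt with rfl | hd
  · simp [Real.zero_rpow ht, Real.zero_rpow (neg_ne_zero.2 ht)]
  rcases eq_or_ne u 0 with rfl | hu
  · simp [Real.zero_rpow ht]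
  have hu : 0 < |u| := abs_pos.2 hu
  calc |u * d ^ (-t)| = |u| ^ (t + (1 - t)) / d ^ t := by
        rw [add_sub_cancel, Real.rpow_one, abs_mul, Real.rpow_neg hd.le,
          abs_of_pos (inv_pos.2 (Real.rpow_pos_of_pos hd t)), div_eq_mul_inv]
    _ = |u / d| ^ t * |u| ^ (1 - t) := by
        rw [abs_div, abs_of_pos hd, Real.div_rpow hu.le hd.le, Real.rpow_add hu]
        ring

theorem Metric.continuous_div_infDist_compl {X : Type*} [PseudoMetricSpace X] {Ω : Set X}
    {u : X → ℝ} (hΩ : IsOpen Ω) (hu : Continuous u) (hsupp : tsupport u ⊆ Ω) :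
    Continuous fun x => u x / Metric.infDist x Ωᶜ := by
  rcases Ωᶜ.eq_empty_or_nonempty with hempty | hne
  · simpa [hempty] using continuous_const
  refine ContinuousOn.continuous_of_tsupport_subset ?_ hΩ ?_
  · refine hu.continuousOn.div (Metric.continuous_infDist_pt _).continuousOn fun x hx => ?_
    exact ((hΩ.isClosed_compl.notMem_iff_infDist_pos hne).1 (by simpa using hx)).ne'
  · exact (tsupport_mul_subset_left (g := fun x => (Metric.infDist x Ωᶜ)⁻¹)).trans hsupp

theorem Real.rpow_mul_rpow_one_sub_le {a b C₀ C₁ X t : ℝ} (ha : 0 ≤ a) (hb : 0 ≤ b)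
    (hC₀ : 0 ≤ C₀) (hC₁ : 0 ≤ C₁) (hX : 0 ≤ X) (ht₀ : 0 ≤ t) (ht₁ : t ≤ 1)
    (haX : a ≤ C₀ * X) (hbX : b ≤ C₁ * X) :
    a ^ t * b ^ (1 - t) ≤ C₀ ^ t * C₁ ^ (1 - t) * X :=
  calc a ^ t * b ^ (1 - t) ≤ (C₀ * X) ^ t * (C₁ * X) ^ (1 - t) := by gcongr
    _ = C₀ ^ t * C₁ ^ (1 - t) * X := by
        rw [Real.mul_rpow hC₀ hX, Real.mul_rpow hC₁ hX, mul_mul_mul_comm,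
          ← Real.rpow_add_of_nonneg hX ht₀ (by linarith), add_sub_cancel, Real.rpow_one]

theorem MeasureTheory.MemLp.rpow_of_nonneg {α : Type*} [MeasurableSpace α] {μ : Measure α}
    {f : α → ℝ} {p r : ℝ} (hf : 0 ≤ f) (hfp : MemLp f (ENNReal.ofReal p) μ) (hr : 0 < r) :
    MemLp (fun x => f x ^ r) (ENNReal.ofReal (p / r)) μ := by
  have h := hfp.norm_rpow_div (ENNReal.ofReal r)
  rw [ENNReal.toReal_ofReal hr.le, ← ENNReal.ofReal_div_of_pos hr] at h
  simpa only [Real.norm_of_nonneg (hf _)] using h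

theorem MeasureTheory.integral_rpow_mul_rpow_rpow_le {α : Type*} [MeasurableSpace α]
    {μ : Measure α} {f g : α → ℝ} {p q s t : ℝ} (hf : 0 ≤ f) (hg : 0 ≤ g)
    (hfp : MemLp f (ENNReal.ofReal p) μ) (hgq : MemLp g (ENNReal.ofReal q) μ)
    (hp : 0 < p) (hq : 0 < q) (hs : 0 < s) (ht₀ : 0 < t) (ht₁ : t < 1)
    (hpqs : t / p + (1 - t) / q = 1 / s) :
    (∫ x, (f x ^ t * g x ^ (1 - t)) ^ s ∂μ) ^ (1 / s) ≤
      ((∫ x, f x ^ p ∂μ) ^ (1 / p)) ^ t * ((∫ x, g x ^ q ∂μ) ^ (1 / q)) ^ (1 - t) := by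
  have ht₁' : 0 < 1 - t := sub_pos.2 ht₁
  have hP : 0 < t * s / p := by positivity
  have hQ : 0 < (1 - t) * s / q := by positivity
  have hPQ : (t * s / p)⁻¹.HolderConjugate ((1 - t) * s / q)⁻¹ :=
    .inv_inv hP hQ (by field_simp at hpqs ⊢; linarith)
  have hA : 0 ≤ ∫ x, f x ^ p ∂μ := integral_nonneg fun x => Real.rpow_nonneg (hf x) _
  have hB : 0 ≤ ∫ x, g x ^ q ∂μ := integral_nonneg fun x => Real.rpow_nonneg (hg x) _
  have hfP := hfp.rpow_of_nonneg hf (mul_pos ht₀ hs)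
  have hgQ := hgq.rpow_of_nonneg hg (mul_pos ht₁' hs)
  rw [← inv_div] at hfP hgQ
  have holder := integral_mul_le_Lp_mul_Lq_of_nonneg hPQ
    (.of_forall fun x => Real.rpow_nonneg (hf x) _) (.of_forall fun x => Real.rpow_nonneg (hg x) _)
    hfP hgQ
  simp_rw [← Real.rpow_mul (hf _), ← Real.rpow_mul (hg _)] at holder
  have hexp₁ : t * s * (t * s / p)⁻¹ = p := by field_simp
  have hexp₂ : (1 - t) * s * ((1 - t) * s / q)⁻¹ = q := by field_simp
  rw [hexp₁, hexp₂, one_div, one_div, inv_inv, inv_inv] at holder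
  have hsplit : ∀ x, (f x ^ t * g x ^ (1 - t)) ^ s = f x ^ (t * s) * g x ^ ((1 - t) * s) := by
    intro x
    rw [Real.mul_rpow (Real.rpow_nonneg (hf x) _) (Real.rpow_nonneg (hg x) _),
      ← Real.rpow_mul (hf x), ← Real.rpow_mul (hg x)]
  calc (∫ x, (f x ^ t * g x ^ (1 - t)) ^ s ∂μ) ^ (1 / s)
      ≤ ((∫ x, f x ^ p ∂μ) ^ (t * s / p) * (∫ x, g x ^ q ∂μ) ^ ((1 - t) * s / q)) ^ (1 / s) := by
        simp_rw [hsplit]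
        gcongr
        exact integral_nonneg fun x =>
          mul_nonneg (Real.rpow_nonneg (hf x) _) (Real.rpow_nonneg (hg x) _)
    _ = ((∫ x, f x ^ p ∂μ) ^ (1 / p)) ^ t * ((∫ x, g x ^ q ∂μ) ^ (1 / q)) ^ (1 - t) := by
        rw [Real.mul_rpow (Real.rpow_nonneg hA _) (Real.rpow_nonneg hB _), ← Real.rpow_mul hA,
          ← Real.rpow_mul hB, ← Real.rpow_mul hA, ← Real.rpow_mul hB]
        congr 2 <;> field_simp

theorem generalized_hardy_inequality_general (N : ℕ) (Ω : Set (EuclideanSpace ℝ (Fin N)))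
    (hΩo : IsOpen Ω)
    (p s t : ℝ) (hs : 1 ≤ s) (ht0 : 0 < t) (ht1 : t < 1)
    (hts : t * s < p)
    (C₀ C₁ : ℝ) (hC₀ : 0 < C₀) (hC₁ : 0 < C₁)
    (hHardy : ∀ u : EuclideanSpace ℝ (Fin N) → ℝ,
      ContDiff ℝ 1 u → HasCompactSupport u → tsupport u ⊆ Ω →
      (∫ x in Ω, |u x / Metric.infDist x Ωᶜ| ^ p) ^ (1 / p) ≤
        C₀ * (∫ x in Ω, ‖fderiv ℝ u x‖ ^ p) ^ (1 / p))
    (hSobolev : ∀ u : EuclideanSpace ℝ (Fin N) → ℝ,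
      ContDiff ℝ 1 u → HasCompactSupport u → tsupport u ⊆ Ω →
      (∫ x in Ω, |u x| ^ (s * p * (1 - t) / (p - t * s))) ^
          (1 / (s * p * (1 - t) / (p - t * s))) ≤
        C₁ * (∫ x in Ω, ‖fderiv ℝ u x‖ ^ p) ^ (1 / p)) :
    ∀ u : EuclideanSpace ℝ (Fin N) → ℝ,
      ContDiff ℝ 1 u → HasCompactSupport u → tsupport u ⊆ Ω →
      (∫ x in Ω, |u x * Metric.infDist x Ωᶜ ^ (-t)| ^ s) ^ (1 / s) ≤
        C₀ ^ t * C₁ ^ (1 - t) * (∫ x in Ω, ‖fderiv ℝ u x‖ ^ p) ^ (1 / p) := by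
  intro u hu hcs hsupp
  have hs₀ : 0 < s := by linarith
  have hpts : 0 < p - t * s := sub_pos.2 hts
  have hp₀ : 0 < p := by nlinarith
  have ht₁ : 0 < 1 - t := sub_pos.2 ht1
  have hq₀ : 0 < s * p * (1 - t) / (p - t * s) := by positivity
  have hexp : t / p + (1 - t) / (s * p * (1 - t) / (p - t * s)) = 1 / s := by
    field_simp
    ring
  have hquot := Metric.continuous_div_infDist_compl hΩo hu.continuous hsupp
  have hquot_supp : HasCompactSupport fun x => |u x / Metric.infDist x Ωᶜ| :=
    hcs.mono fun x hx => by simp_all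
  have hgrad : 0 ≤ (∫ x in Ω, ‖fderiv ℝ u x‖ ^ p) ^ (1 / p) :=
    Real.rpow_nonneg (integral_nonneg fun x => Real.rpow_nonneg (norm_nonneg _) _) _
  simp_rw [abs_mul_rpow_neg_eq_abs_div_rpow_mul_abs_rpow Metric.infDist_nonneg ht0.ne']
  refine (integral_rpow_mul_rpow_rpow_le (fun x => abs_nonneg _) (fun x => abs_nonneg _)
    (hquot.abs.memLp_of_hasCompactSupport hquot_supp)
    (hu.continuous.abs.memLp_of_hasCompactSupport hcs.abs) hp₀ hq₀ hs₀ ht0 ht1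
    hexp).trans ?_
  exact Real.rpow_mul_rpow_one_sub_le
    (Real.rpow_nonneg (integral_nonneg fun x => Real.rpow_nonneg (abs_nonneg _) _) _)
    (Real.rpow_nonneg (integral_nonneg fun x => Real.rpow_nonneg (abs_nonneg _) _) _)
    hC₀.le hC₁.le hgrad ht0.le ht1.le (hHardy u hu hcs hsupp) (hSobolev u hu hcs hsupp)

/-- Conditional form of the generalized Hardy inequality (Lemma 7.2 of the paper):
let `Ω ⊂ ℝ^N` be bounded open, `d x = dist(x, Ωᶜ)`, and let `p > 1`, `s ≥ 1`,
`0 < t < 1` with `ts < p`, and `(s - ts)/(p - ts) ≤ p*/p` when `p < N`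
(`p* = Np/(N-p)`). If every `C¹` function `u` with compact support in `Ω` satisfies
the Hardy inequality `‖u/d‖_{L^p(Ω)} ≤ C₀ ‖∇u‖_{L^p(Ω)}` and the Sobolev inequality
`‖u‖_{L^{sp(1-t)/(p-ts)}(Ω)} ≤ C₁ ‖∇u‖_{L^p(Ω)}`, then every such `u` satisfies
`‖u d^(-t)‖_{L^s(Ω)} ≤ C₀^t C₁^(1-t) ‖∇u‖_{L^p(Ω)}`. -/
theorem generalized_hardy_inequality (N : ℕ) (Ω : Set (EuclideanSpace ℝ (Fin N)))
    (hΩo : IsOpen Ω) (hΩb : Bornology.IsBounded Ω)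
    (p s t : ℝ) (hp : 1 < p) (hs : 1 ≤ s) (ht0 : 0 < t) (ht1 : t < 1)
    (hts : t * s < p)
    (hcrit : p < (N : ℝ) → (s - t * s) / (p - t * s) ≤ ((N : ℝ) * p / ((N : ℝ) - p)) / p)
    (C₀ C₁ : ℝ) (hC₀ : 0 < C₀) (hC₁ : 0 < C₁)
    (hHardy : ∀ u : EuclideanSpace ℝ (Fin N) → ℝ,
      ContDiff ℝ 1 u → HasCompactSupport u → tsupport u ⊆ Ω →
      (∫ x in Ω, |u x / Metric.infDist x Ωᶜ| ^ p) ^ (1 / p) ≤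
        C₀ * (∫ x in Ω, ‖fderiv ℝ u x‖ ^ p) ^ (1 / p))
    (hSobolev : ∀ u : EuclideanSpace ℝ (Fin N) → ℝ,
      ContDiff ℝ 1 u → HasCompactSupport u → tsupport u ⊆ Ω →
      (∫ x in Ω, |u x| ^ (s * p * (1 - t) / (p - t * s))) ^
          (1 / (s * p * (1 - t) / (p - t * s))) ≤
        C₁ * (∫ x in Ω, ‖fderiv ℝ u x‖ ^ p) ^ (1 / p)) :
    ∀ u : EuclideanSpace ℝ (Fin N) → ℝ,
      ContDiff ℝ 1 u → HasCompactSupport u → tsupport u ⊆ Ω →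
      (∫ x in Ω, |u x * Metric.infDist x Ωᶜ ^ (-t)| ^ s) ^ (1 / s) ≤
        C₀ ^ t * C₁ ^ (1 - t) * (∫ x in Ω, ‖fderiv ℝ u x‖ ^ p) ^ (1 / p) :=
  generalized_hardy_inequality_general N Ω hΩo p s t hs ht0 ht1 hts C₀ C₁ hC₀ hC₁ hHardy hSobolev
end

section
/- Let (Ω, μ) be a measure space, let 1 ≤ p < ∞, and let α ∈ L^p(Ω, μ) be real-valued. Define the cone C_α = { v ∈ L^p(Ω, μ) : v(x) ≥ α(x) for μ-a.e. x }. Then for every u ∈ L^p(Ω, μ) one has dist_{L^p}(u, C_α) = ‖(u − α)⁻‖_{L^p}, i.e. the L^p distance from u to C_α equals the L^p norm of the negative part of u − α. -/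
open MeasureTheory

/-! The infimum is attained at `w = max u α`: then `u - w = -(u - α)⁻`, while for every
admissible `w` one has `(u - α)⁻ ≤ |u - w|` pointwise a.e., so `‖(u - α)⁻‖ₚ ≤ ‖u - w‖ₚ`. -/

section

variable {Ω : Type*} [MeasurableSpace Ω] {μ : Measure Ω} {q : ENNReal} {α u w : Ω → ℝ}

lemma eLpNorm_sub_max_eq_eLpNorm_negPart :
    eLpNorm (u - fun x => max (u x) (α x)) q μ = eLpNorm (fun x => max (α x - u x) 0) q μ := by
  have hsub : (u - fun x => max (u x) (α x)) = -fun x => max (α x - u x) 0 := by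
    funext x
    simp only [Pi.sub_apply, Pi.neg_apply]
    grind
  rw [hsub, eLpNorm_neg]

lemma eLpNorm_negPart_le_of_ae_le (hαw : ∀ᵐ x ∂μ, α x ≤ w x) :
    eLpNorm (fun x => max (α x - u x) 0) q μ ≤ eLpNorm (u - w) q μ := by
  refine eLpNorm_mono_ae (hαw.mono fun x hx => ?_)
  simp only [Pi.sub_apply, Real.norm_eq_abs]
  grind

end

theorem dist_to_cone_eq_negPart_general {Ω : Type*} [MeasurableSpace Ω] (μ : Measure Ω)
    (p : ℝ) (α u : Ω → ℝ)
    (hα : MemLp α (ENNReal.ofReal p) μ) (hu : MemLp u (ENNReal.ofReal p) μ) :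
    sInf {r : ℝ | ∃ w : Ω → ℝ, MemLp w (ENNReal.ofReal p) μ ∧
        (∀ᵐ x ∂μ, α x ≤ w x) ∧
        r = (eLpNorm (u - w) (ENNReal.ofReal p) μ).toReal} =
      (eLpNorm (fun x => max (α x - u x) 0) (ENNReal.ofReal p) μ).toReal := by
  refine IsLeast.csInf_eq ⟨⟨fun x => max (u x) (α x), hu.sup hα,
    .of_forall fun x => le_max_right _ _, by rw [eLpNorm_sub_max_eq_eLpNorm_negPart]⟩, ?_⟩
  rintro _ ⟨w, hw, hαw, rfl⟩
  exact ENNReal.toReal_mono (hu.sub hw).eLpNorm_ne_top (eLpNorm_negPart_le_of_ae_le hαw)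

/-- L^p content of Lemma 4.1 (ii)–(iii) of the paper: for `1 ≤ p < ∞` and
`α, u ∈ L^p(Ω, μ)` real-valued, the `L^p` distance from `u` to the cone
`C_α = {v ∈ L^p : v ≥ α a.e.}` equals the `L^p` norm of the negative part
`(u - α)⁻ = max(α - u, 0)`. -/
theorem dist_to_cone_eq_negPart {Ω : Type*} [MeasurableSpace Ω] (μ : Measure Ω)
    (p : ℝ) (hp : 1 ≤ p) (α u : Ω → ℝ)
    (hα : MemLp α (ENNReal.ofReal p) μ) (hu : MemLp u (ENNReal.ofReal p) μ) :
    sInf {r : ℝ | ∃ w : Ω → ℝ, MemLp w (ENNReal.ofReal p) μ ∧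
        (∀ᵐ x ∂μ, α x ≤ w x) ∧
        r = (eLpNorm (u - w) (ENNReal.ofReal p) μ).toReal} =
      (eLpNorm (fun x => max (α x - u x) 0) (ENNReal.ofReal p) μ).toReal :=
  dist_to_cone_eq_negPart_general μ p α u hα hu
end

section
/- Let (Ω, μ) be a measure space, let 1 ≤ p < ∞, and let α, β ∈ L^p(Ω, μ) be real-valued functions such that μ({ x ∈ Ω : α(x) > β(x) }) > 0. Then there exists ε̄ > 0 such that no u ∈ L^p(Ω, μ) satisfies both ‖(u − α)⁻‖_{L^p} < ε̄ and ‖(u − β)⁺‖_{L^p} < ε̄. -/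
open MeasureTheory
open scoped ENNReal

/-!
Since `α - β = (α - u) + (u - β)`, pointwise `(α - β)⁺ ≤ (u - α)⁻ + (u - β)⁺`, so by Minkowski
`‖(α - β)⁺‖_p ≤ ‖(u - α)⁻‖_p + ‖(u - β)⁺‖_p` for every `u`. The left side is finite because
`α, β ∈ L^p`, and positive because `α > β` on a set of positive measure; half of it is the `ε̄`.
-/

namespace MeasureTheory

variable {Ω : Type*} [MeasurableSpace Ω] {μ : Measure Ω} {p : ℝ≥0∞}

theorem eLpNorm_pos_part_pos {f : Ω → ℝ} (hf : AEStronglyMeasurable f μ) (hp : p ≠ 0)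
    (hpos : 0 < μ {x | 0 < f x}) : 0 < eLpNorm (fun x => max (f x) 0) p μ := by
  refine pos_iff_ne_zero.2 fun h => hpos.ne' ?_
  have hf0 : (fun x => max (f x) 0) =ᵐ[μ] 0 :=
    (eLpNorm_eq_zero_iff (hf.sup aestronglyMeasurable_const) hp).1 h
  have hf_nonpos : ∀ᵐ x ∂μ, ¬ 0 < f x := by
    filter_upwards [hf0] with x hx
    simpa using hx
  simpa using ae_iff.1 hf_nonpos

theorem eLpNorm_pos_part_sub_le_add (hp : 1 ≤ p) {f g u : Ω → ℝ} (hf : AEStronglyMeasurable f μ)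
    (hg : AEStronglyMeasurable g μ) (hu : AEStronglyMeasurable u μ) :
    eLpNorm (fun x => max (f x - g x) 0) p μ ≤
      eLpNorm (fun x => max (f x - u x) 0) p μ + eLpNorm (fun x => max (u x - g x) 0) p μ :=
  calc eLpNorm (fun x => max (f x - g x) 0) p μ
      ≤ eLpNorm ((fun x => max (f x - u x) 0) + fun x => max (u x - g x) 0) p μ := by
        refine eLpNorm_mono_real fun x => ?_
        rw [Real.norm_of_nonneg (le_max_right _ _), Pi.add_apply]
        exact max_le (by linarith [le_max_left (f x - u x) 0, le_max_left (u x - g x) 0])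
          (by positivity)
    _ ≤ _ := eLpNorm_add_le ((hf.sub hu).sup aestronglyMeasurable_const)
        ((hu.sub hg).sup aestronglyMeasurable_const) hp

end MeasureTheory

/-- L^p analogue of Lemma 5.1 of the paper: for `1 ≤ p < ∞` and real-valued
`α, β ∈ L^p(Ω, μ)` with `α > β` on a set of positive measure, there is `ε̄ > 0`
such that no `u ∈ L^p(Ω, μ)` satisfies both `‖(u - α)⁻‖_p < ε̄` and
`‖(u - β)⁺‖_p < ε̄` (here `(u-α)⁻ = max(α-u,0)` and `(u-β)⁺ = max(u-β,0)`). -/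
theorem enlarged_cones_disjoint {Ω : Type*} [MeasurableSpace Ω] (μ : Measure Ω)
    (p : ℝ) (hp : 1 ≤ p) (α β : Ω → ℝ)
    (hα : MemLp α (ENNReal.ofReal p) μ) (hβ : MemLp β (ENNReal.ofReal p) μ)
    (hpos : 0 < μ {x | β x < α x}) :
    ∃ ε : ℝ, 0 < ε ∧ ∀ u : Ω → ℝ, MemLp u (ENNReal.ofReal p) μ →
      ¬ ((eLpNorm (fun x => max (α x - u x) 0) (ENNReal.ofReal p) μ).toReal < ε ∧
         (eLpNorm (fun x => max (u x - β x) 0) (ENNReal.ofReal p) μ).toReal < ε) := by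
  have hp₁ : 1 ≤ ENNReal.ofReal p := by simpa using ENNReal.ofReal_le_ofReal hp
  set gap := eLpNorm (fun x => max (α x - β x) 0) (ENNReal.ofReal p) μ
  have hgap_pos : 0 < gap :=
    eLpNorm_pos_part_pos (hα.1.sub hβ.1) (zero_lt_one.trans_le hp₁).ne' (by simpa using hpos)
  have hgap_fin : gap ≠ ∞ := (hα.sub hβ).pos_part.eLpNorm_ne_top
  refine ⟨gap.toReal / 2, half_pos (ENNReal.toReal_pos hgap_pos.ne' hgap_fin), ?_⟩
  rintro u hu ⟨hlower, hupper⟩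
  have hαu : eLpNorm (fun x => max (α x - u x) 0) (ENNReal.ofReal p) μ ≠ ∞ :=
    (hα.sub hu).pos_part.eLpNorm_ne_top
  have huβ : eLpNorm (fun x => max (u x - β x) 0) (ENNReal.ofReal p) μ ≠ ∞ :=
    (hu.sub hβ).pos_part.eLpNorm_ne_top
  have hsplit := ENNReal.toReal_mono (ENNReal.add_ne_top.2 ⟨hαu, huβ⟩)
    (eLpNorm_pos_part_sub_le_add hp₁ hα.1 hβ.1 hu.1)
  rw [ENNReal.toReal_add hαu huβ] at hsplit
  linarith
end
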